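/- Let $\mathcal{T}_X$ be an essential complexified toric arrangement in $(\mathbb{C}^*)^n$ with $n\geq 2$. Then the compact singular set $\Sigma^{cpt}=\Sigma_X\cap(S^1)^n$ is path-connected. -/

import Mathlib

/-- A character is primitive if the gcd of its coordinates is `1`. -/
def IsPrimitiveChar {n : ℕ} (χ : Fin n → ℤ) : Prop := ∃ c : Fin n → ℤ, ∑ i, c i * χ i = 1

noncomputable section CompactToric

/-- The compact torus `(S¹)^n`. -/
abbrev CTorus (n : ℕ) := Fin n → Circle

/-- The character of the compact torus associated to an integer vector. -/
def cTorusChar {n : ℕ} (χ : Fin n → ℤ) (t : CTorus n) : Circle := ∏ i, t i ^ χ i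

/-- A complexified toric arrangement: all defining constants have modulus one, so we record
them as elements of the circle. -/
structure CToricArrangement (n : ℕ) where
  X : Finset ((Fin n → ℤ) × Circle)
  prim : ∀ p ∈ X, IsPrimitiveChar p.1

namespace CToricArrangement

variable {n : ℕ} (A : CToricArrangement n)

/-- The compact toric hyperplane `H_{χ,a} ∩ (S¹)^n`. -/
def hyp (p : (Fin n → ℤ) × Circle) : Set (CTorus n) := {t | cTorusChar p.1 t = p.2}

/-- The compact singular set `Σ^{cpt}`. -/
def sing : Set (CTorus n) := ⋃ p ∈ A.X, hyp p

/-- The rank: the dimension of the real span of the character set. -/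
def rank : ℕ :=
  Module.finrank ℝ (Submodule.span ℝ
    ((fun χ : Fin n → ℤ => fun i => (χ i : ℝ)) '' {χ | ∃ a, (χ, a) ∈ A.X}) :
      Submodule ℝ (Fin n → ℝ))

/-- Essential: the characters span `ℝ^n`. -/
def Essential : Prop := A.rank = n

end CToricArrangement

end CompactToric

/-!
Every hypersurface `hyp (χ, a)` with `χ` primitive is the image under the exponential map
`ℝⁿ → (S¹)ⁿ` of a real affine hyperplane `⟨χ, θ⟩ = arg a` (primitivity lets one absorb the
`2πℤ` ambiguity into the lattice), hence path-connected. Two hypersurfaces whose characters are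
linearly independent meet. Essentiality with `n ≥ 2` gives two independent characters `χ₀, χ₁`;
every other character is independent of one of them, so every hypersurface meets the
path-connected set `hyp χ₀ ∪ hyp χ₁`.
-/

open Matrix Set

section LinearAlgebra

variable {K V : Type*} [Field K] [AddCommGroup V] [Module K V]

theorem exists_linearIndependent_pair_of_one_lt_finrank_span {S : Set V}
    (h : 1 < Module.finrank K (Submodule.span K S)) :
    ∃ u ∈ S, ∃ v ∈ S, LinearIndependent K ![u, v] := by
  obtain ⟨u, huS, hu⟩ : ∃ u ∈ S, u ≠ 0 := by
    by_contra! h0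
    rw [Submodule.span_eq_bot.mpr h0, finrank_bot] at h
    omega
  by_contra! hdep
  have hS : Submodule.span K S ≤ K ∙ u := Submodule.span_le.mpr fun v hv => by
    have huv := hdep u huS v hv
    rw [LinearIndependent.pair_iff' hu] at huv
    push Not at huv
    exact Submodule.mem_span_singleton.mpr huv
  have := Submodule.finrank_mono hS
  rw [finrank_span_singleton hu] at this
  omega

theorem LinearIndependent.pair_or_pair {u v w : V} (huv : LinearIndependent K ![u, v])
    (hw : w ≠ 0) : LinearIndependent K ![u, w] ∨ LinearIndependent K ![w, v] := by
  have hu : u ≠ 0 := huv.ne_zero 0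
  rw [LinearIndependent.pair_iff' hu, LinearIndependent.pair_iff' hw]
  by_contra! ⟨⟨a, rfl⟩, ⟨b, hb⟩⟩
  exact (LinearIndependent.pair_iff' hu).mp huv (b * a) (by rw [mul_smul, hb])

end LinearAlgebra

theorem exists_dotProduct_eq_of_linearIndependent {K m n : Type*} [Field K] [Fintype m]
    [Fintype n] {v : m → n → K} (hv : LinearIndependent K v) (b : m → K) :
    ∃ x, ∀ i, v i ⬝ᵥ x = b i := by
  let M : Matrix m n K := Matrix.of v
  have hrange : LinearMap.range M.mulVecLin = ⊤ := by
    apply Submodule.eq_top_of_finrank_eq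
    rw [Module.finrank_fintype_fun_eq_card]
    exact LinearIndependent.rank_matrix (M := M) hv
  obtain ⟨x, hx⟩ := LinearMap.range_eq_top.mp hrange b
  exact ⟨x, fun i => congrFun hx i⟩

theorem isPathConnected_biUnion_of_inter_nonempty {X ι : Type*} [TopologicalSpace X]
    {s : Set ι} {F : ι → Set X} {C : Set X} (hC : IsPathConnected C)
    (hCsub : C ⊆ ⋃ i ∈ s, F i) (hF : ∀ i ∈ s, IsPathConnected (F i))
    (hmeet : ∀ i ∈ s, (C ∩ F i).Nonempty) : IsPathConnected (⋃ i ∈ s, F i) := by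
  obtain ⟨x, hx, hjoin⟩ := hC
  refine ⟨x, hCsub hx, fun {y} hy => ?_⟩
  obtain ⟨i, hi, hyi⟩ := mem_iUnion₂.mp hy
  obtain ⟨z, hzC, hzi⟩ := hmeet i hi
  exact ((hjoin hzC).mono hCsub).trans
    (((hF i hi).joinedIn z hzi y hyi).mono (subset_biUnion_of_mem hi))

section Torus

variable {n : ℕ}

def realChar (χ : Fin n → ℤ) : Fin n → ℝ := fun i => (χ i : ℝ)

theorem realChar_ne_zero {χ : Fin n → ℤ} (hχ : IsPrimitiveChar χ) : realChar χ ≠ 0 := by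
  obtain ⟨c, hc⟩ := hχ
  intro h0
  have hz : χ = 0 := funext fun i => by
    have : (χ i : ℝ) = 0 := congrFun h0 i
    exact_mod_cast this
  simp [hz] at hc

theorem IsPrimitiveChar.exists_realChar_dotProduct_eq_one {χ : Fin n → ℤ}
    (hχ : IsPrimitiveChar χ) : ∃ c : Fin n → ℤ, realChar χ ⬝ᵥ realChar c = 1 := by
  obtain ⟨c, hc⟩ := hχ
  refine ⟨c, ?_⟩
  simp only [dotProduct, realChar, ← Int.cast_mul, ← Int.cast_sum, mul_comm (χ _)]
  exact_mod_cast hc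

noncomputable def torusExp (θ : Fin n → ℝ) : CTorus n := fun i => Circle.exp (θ i)

theorem continuous_torusExp : Continuous (torusExp (n := n)) :=
  continuous_pi fun i => Circle.exp.continuous.comp (continuous_apply i)

theorem torusExp_add_two_pi_smul_realChar (θ : Fin n → ℝ) (k : Fin n → ℤ) :
    torusExp (θ + (2 * Real.pi) • realChar k) = torusExp θ := by
  funext i
  simp only [torusExp, realChar, Pi.add_apply, Pi.smul_apply, smul_eq_mul, Circle.exp_add,
    mul_comm (2 * Real.pi), Circle.exp_int_mul_two_pi, mul_one]

theorem cTorusChar_torusExp (χ : Fin n → ℤ) (θ : Fin n → ℝ) :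
    cTorusChar χ (torusExp θ) = Circle.exp (realChar χ ⬝ᵥ θ) := by
  simp only [cTorusChar, torusExp, dotProduct, realChar, ← Circle.exp_intCast_mul]
  exact (map_sum Circle.expHom _ _).symm

end Torus

namespace CToricArrangement

variable {n : ℕ}

theorem torusExp_mem_hyp {p : (Fin n → ℤ) × Circle} {θ : Fin n → ℝ}
    (hθ : realChar p.1 ⬝ᵥ θ = Complex.arg p.2) : torusExp θ ∈ hyp p := by
  rw [hyp, mem_ofPred_eq, cTorusChar_torusExp, hθ, Circle.exp_arg]

theorem hyp_eq_image_torusExp {p : (Fin n → ℤ) × Circle} (hp : IsPrimitiveChar p.1) :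
    hyp p = torusExp '' {θ | realChar p.1 ⬝ᵥ θ = Complex.arg p.2} := by
  refine Subset.antisymm (fun t ht => ?_) (image_subset_iff.mpr fun θ => torusExp_mem_hyp)
  obtain ⟨c, hc⟩ := hp.exists_realChar_dotProduct_eq_one
  let θ : Fin n → ℝ := fun i => Complex.arg (t i)
  have hθ : torusExp θ = t := funext fun i => Circle.exp_arg (t i)
  obtain ⟨m, hm⟩ : ∃ m : ℤ, realChar p.1 ⬝ᵥ θ = Complex.arg p.2 + m * (2 * Real.pi) := by
    rw [← Circle.exp_eq_exp, ← cTorusChar_torusExp, hθ, Circle.exp_arg]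
    exact ht
  -- shifting `θ` by `-2πm·c` corrects the level by `-2πm ⟨χ, c⟩ = -2πm`
  refine ⟨θ + (2 * Real.pi) • realChar (-m • c), ?_, ?_⟩
  · have hmc : realChar (-m • c) = (-m : ℝ) • realChar c := by
      funext i; simp [realChar]
    simp only [mem_ofPred_eq, dotProduct_add, dotProduct_smul, hmc, hc, hm, smul_eq_mul]
    ring
  · rw [torusExp_add_two_pi_smul_realChar, hθ]

theorem isPathConnected_hyp {p : (Fin n → ℤ) × Circle} (hp : IsPrimitiveChar p.1) :
    IsPathConnected (hyp p) := by
  rw [hyp_eq_image_torusExp hp]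
  refine IsPathConnected.image ?_ continuous_torusExp
  have hlin : IsLinearMap ℝ (realChar p.1 ⬝ᵥ ·) :=
    ⟨dotProduct_add _, fun a θ => dotProduct_smul a _ θ⟩
  refine (convex_hyperplane hlin _).isPathConnected ?_
  obtain ⟨c, hc⟩ := hp.exists_realChar_dotProduct_eq_one
  exact ⟨Complex.arg p.2 • realChar c, by simp [dotProduct_smul, hc]⟩

theorem hyp_inter_hyp_nonempty {p q : (Fin n → ℤ) × Circle}
    (hpq : LinearIndependent ℝ ![realChar p.1, realChar q.1]) : (hyp p ∩ hyp q).Nonempty := by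
  obtain ⟨θ, hθ⟩ :=
    exists_dotProduct_eq_of_linearIndependent hpq ![Complex.arg p.2, Complex.arg q.2]
  exact ⟨torusExp θ, torusExp_mem_hyp (hθ 0), torusExp_mem_hyp (hθ 1)⟩

end CToricArrangement

open CToricArrangement in
theorem compact_singular_set_path_connected (n : ℕ) (hn : 2 ≤ n)
    (A : CToricArrangement n) (hess : A.Essential) :
    IsPathConnected A.sing := by
  have hrank : 1 < Module.finrank ℝ (Submodule.span ℝ (realChar '' {χ | ∃ a, (χ, a) ∈ A.X})) := by
    change 1 < A.rank
    rw [hess]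
    omega
  obtain ⟨_, ⟨χ₀, ⟨a₀, h₀⟩, rfl⟩, _, ⟨χ₁, ⟨a₁, h₁⟩, rfl⟩, hind⟩ :=
    exists_linearIndependent_pair_of_one_lt_finrank_span hrank
  have hC : IsPathConnected (hyp (χ₀, a₀) ∪ hyp (χ₁, a₁)) :=
    (isPathConnected_hyp (A.prim _ h₀)).union (isPathConnected_hyp (A.prim _ h₁))
      (hyp_inter_hyp_nonempty hind)
  change IsPathConnected (⋃ p ∈ (A.X : Set ((Fin n → ℤ) × Circle)), hyp p)
  refine isPathConnected_biUnion_of_inter_nonempty hC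
    (union_subset (subset_biUnion_of_mem h₀) (subset_biUnion_of_mem h₁))
    (fun p hp => isPathConnected_hyp (A.prim p hp)) fun p hp => ?_
  rcases hind.pair_or_pair (realChar_ne_zero (A.prim p hp)) with h | h
  · obtain ⟨t, ht₀, htp⟩ := hyp_inter_hyp_nonempty (p := (χ₀, a₀)) (q := p) h
    exact ⟨t, Or.inl ht₀, htp⟩
  · obtain ⟨t, htp, ht₁⟩ := hyp_inter_hyp_nonempty (p := p) (q := (χ₁, a₁)) h
    exact ⟨t, Or.inr ht₁, htp⟩
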